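/- Let E be a finite ground set, let X ⊆ ℝ^E be a nonempty convex set with dim aff(X) = k, let {x_0, …, x_k} ⊆ X be an affine basis of X, and for F ⊆ E set A(F) := {x_i − x_0 : i ∈ {1, …, k}} ∪ {χ_e : e ∈ F}. Then the family 𝒜_X := {F ⊆ E : A(F) is linearly independent} is the collection of independent sets of a matroid on E, and the rank of this matroid equals |E| − k. -/

import Mathlib

/-- The family of vectors `A(F)` associated with an affine basis `x 0, …, x k` and a
set `F ⊆ E`: it consists of the vectors `x i - x 0` for `i = 1, …, k` together with
the standard unit vectors `χ_e` for `e ∈ F`. -/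
noncomputable def AFam {E : Type*} [Fintype E] [DecidableEq E] {k : ℕ}
    (x : Fin (k + 1) → E → ℝ) (F : Finset E) :
    (Fin k ⊕ {e : E // e ∈ F}) → E → ℝ :=
  Sum.elim (fun i => x i.succ - x 0) (fun e => Pi.single e.val (1 : ℝ))

/-! `A(F)` is linearly independent exactly when the images of `χ_e`, `e ∈ F`, are linearly
independent in the quotient of `ℝ^E` by the span `W` of the `k` independent vectors
`x i - x 0`. So `𝒜_X` is the vector matroid of these images, whose rank is
`dim (ℝ^E ⧸ W) = |E| - k`. -/

open Set Submodule Module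

section

variable {K V ι κ : Type*} [DivisionRing K] [AddCommGroup V] [Module K V]

theorem linearIndependent_sumElim_iff_quotient {v : ι → V} (hv : LinearIndependent K v)
    (w : κ → V) :
    LinearIndependent K (Sum.elim v w) ↔ LinearIndependent K ((span K (range v)).mkQ ∘ w) := by
  rw [linearIndependent_sum, Sum.elim_comp_inl, Sum.elim_comp_inr]
  constructor
  · rintro ⟨-, hw, hdisj⟩
    exact hw.map (by rwa [ker_mkQ, disjoint_comm])
  · intro h
    exact ⟨hv, h.of_comp, by simpa [disjoint_comm] using Submodule.range_ker_disjoint h⟩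

theorem LinearIndepOn.exists_insert_of_card_lt [DecidableEq ι] {u : ι → V} {I J : Finset ι}
    (hI : LinearIndepOn K u I) (hJ : LinearIndepOn K u J) (hcard : I.card < J.card) :
    ∃ e ∈ J, e ∉ I ∧ LinearIndepOn K u ↑(insert e I) := by
  classical
  by_contra! h
  have hJI : span K (u '' J) ≤ span K (u '' I) := span_le.2 <| by
    rintro _ ⟨e, he, rfl⟩
    by_contra hnot
    have heI : e ∉ I := fun heI => hnot (subset_span (mem_image_of_mem u heI))
    exact h e he heI (by simpa using hI.insert hnot)
  have hJcard : finrank K (span K (u '' J)) = J.card := by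
    rw [image_eq_range, finrank_span_eq_card hJ]
    exact Fintype.card_coe J
  have hIcard : finrank K (span K (u '' I)) ≤ I.card := by
    rw [← Finset.coe_image]
    exact (finrank_span_finset_le_card _).trans Finset.card_image_le
  have : FiniteDimensional K (span K (u '' I)) :=
    FiniteDimensional.span_of_finite K (I.finite_toSet.image u)
  have := Submodule.finrank_mono hJI
  omega

theorem exists_linearIndepOn_card_eq_finrank [Fintype ι] [FiniteDimensional K V] {u : ι → V}
    (hu : span K (range u) = ⊤) :
    ∃ I : Finset ι, LinearIndepOn K u I ∧ I.card = finrank K V := by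
  classical
  obtain ⟨b, -, -, hspan, hb⟩ := exists_linearIndepOn_extension (linearIndepOn_empty K u)
    (empty_subset univ)
  refine ⟨b.toFinset, by simpa using hb, ?_⟩
  have htop : span K (u '' b) = ⊤ := by
    rw [eq_top_iff, ← hu, ← image_univ]
    exact span_le.2 hspan
  rw [← finrank_top K V, ← htop, image_eq_range, finrank_span_eq_card hb, Set.toFinset_card]

end

theorem AffineIndependent.linearIndependent_succ_sub_zero {V : Type*} [AddCommGroup V]
    [Module ℝ V] {k : ℕ} {x : Fin (k + 1) → V} (hx : AffineIndependent ℝ x) :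
    LinearIndependent ℝ fun i : Fin k => x i.succ - x 0 :=
  ((affineIndependent_iff_linearIndependent_vsub ℝ x 0).1 hx).comp
    (fun i => ⟨i.succ, i.succ_ne_zero⟩) fun _ _ h => Fin.succ_injective _ (congrArg Subtype.val h)

theorem span_range_mkQ_single {E : Type*} [DecidableEq E] [Finite E] (W : Submodule ℝ (E → ℝ)) :
    span ℝ (range fun e => W.mkQ (Pi.single e 1)) = ⊤ := by
  have hbasis : (fun e => Pi.single e 1) = Pi.basisFun ℝ E := by
    funext e; rw [Pi.basisFun_apply]
  rw [range_comp' W.mkQ, span_image, hbasis, (Pi.basisFun ℝ E).span_eq, Submodule.map_top,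
    range_mkQ]

theorem stmt3_general {E : Type*} [Fintype E] [DecidableEq E]
    (k : ℕ)
    (x : Fin (k + 1) → E → ℝ)
    (hindep : AffineIndependent ℝ x) :
    LinearIndependent ℝ (AFam x (∅ : Finset E)) ∧
    (∀ I J : Finset E, I ⊆ J →
      LinearIndependent ℝ (AFam x J) → LinearIndependent ℝ (AFam x I)) ∧
    (∀ I J : Finset E, LinearIndependent ℝ (AFam x I) →
      LinearIndependent ℝ (AFam x J) → I.card < J.card →
      ∃ e ∈ J, e ∉ I ∧ LinearIndependent ℝ (AFam x (insert e I))) ∧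
    (∀ I : Finset E, LinearIndependent ℝ (AFam x I) →
      I.card + k ≤ Fintype.card E) ∧
    (∃ I : Finset E, LinearIndependent ℝ (AFam x I) ∧
      I.card + k = Fintype.card E) := by
  have hd := hindep.linearIndependent_succ_sub_zero
  set W := span ℝ (range fun i : Fin k => x i.succ - x 0)
  set u : E → (E → ℝ) ⧸ W := fun e => W.mkQ (Pi.single e 1)
  have hAFam (F : Finset E) : LinearIndependent ℝ (AFam x F) ↔ LinearIndepOn ℝ u F :=
    linearIndependent_sumElim_iff_quotient hd _
  have hrank : finrank ℝ ((E → ℝ) ⧸ W) + k = Fintype.card E := by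
    rw [← finrank_pi ℝ, ← W.finrank_quotient_add_finrank, finrank_span_eq_card hd,
      Fintype.card_fin]
  simp only [hAFam]
  refine ⟨by simp, fun I J hIJ hJ => hJ.mono (Finset.coe_subset.2 hIJ),
    fun I J hI hJ => hI.exists_insert_of_card_lt hJ, fun I hI => ?_, ?_⟩
  · have := (Fintype.card_coe I).symm.trans_le hI.fintype_card_le_finrank
    omega
  · obtain ⟨I, hI, hcard⟩ := exists_linearIndepOn_card_eq_finrank (span_range_mkQ_single W)
    exact ⟨I, hI, by omega⟩

/-- Let `X ⊆ ℝ^E` be a nonempty convex set whose affine hull has dimension `k`, and let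
`x 0, …, x k` be an affine basis of `X`.  Then the family
`𝒜_X = {F ⊆ E : A(F) is linearly independent}` forms the independent sets of a matroid
on `E` (it contains `∅`, is downward closed, and satisfies the augmentation axiom),
and the rank of this matroid is `|E| - k` (i.e. all its independent sets have size at
most `|E| - k`, and this bound is attained). -/
theorem stmt3 {E : Type*} [Fintype E] [DecidableEq E] (X : Set (E → ℝ))
    (hX : X.Nonempty) (hconv : Convex ℝ X)
    (k : ℕ) (hdim : Module.finrank ℝ ↥(vectorSpan ℝ X) = k)
    (x : Fin (k + 1) → E → ℝ) (hxX : ∀ i, x i ∈ X)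
    (hindep : AffineIndependent ℝ x)
    (hmax : ∀ y ∈ X, y ∉ Set.range x →
      ¬ AffineIndependent ℝ (Fin.cons y x : Fin (k + 2) → E → ℝ)) :
    LinearIndependent ℝ (AFam x (∅ : Finset E)) ∧
    (∀ I J : Finset E, I ⊆ J →
      LinearIndependent ℝ (AFam x J) → LinearIndependent ℝ (AFam x I)) ∧
    (∀ I J : Finset E, LinearIndependent ℝ (AFam x I) →
      LinearIndependent ℝ (AFam x J) → I.card < J.card →
      ∃ e ∈ J, e ∉ I ∧ LinearIndependent ℝ (AFam x (insert e I))) ∧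
    (∀ I : Finset E, LinearIndependent ℝ (AFam x I) →
      I.card + k ≤ Fintype.card E) ∧
    (∃ I : Finset E, LinearIndependent ℝ (AFam x I) ∧
      I.card + k = Fintype.card E) :=
  stmt3_general k x hindep
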